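/- Let e be an idempotent of S. Two elements x, y ∈ eJe lie in the same G̃-orbit if and only if they lie in the same G̃_e-orbit, i.e. there exist t ∈ H and a, b ∈ N with y = t·a·x·b·t⁻¹ if and only if there exist t' ∈ (eSe)^× (inverse taken in eAe) and a', b' ∈ e + eJe with y = t'·a'·x·b'·t'⁻¹. -/
import Mathlib


/-- `x, y ∈ J` lie in the same `G̃`-orbit: `y = t * a * x * b * t⁻¹` with `t ∈ H = S^×`
(both `t` and `t⁻¹` lie in `S`) and `a, b ∈ N = 1 + J`. -/
def SameOrbitJ {F A : Type*} [Field F] [Ring A] [Algebra F A]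
    (J : Ideal A) (S : Subalgebra F A) (x y : A) : Prop :=
  ∃ t : Aˣ, (t : A) ∈ S ∧ ((t⁻¹ : Aˣ) : A) ∈ S ∧
    ∃ a b : A, a - 1 ∈ J ∧ b - 1 ∈ J ∧
      y = (t : A) * a * x * b * ((t⁻¹ : Aˣ) : A)

/-- `x, y ∈ J_e = eJe` lie in the same `G̃_e`-orbit: `y = t * a * x * b * s` where
`t ∈ (eSe)ˣ` with inverse `s` (taken in `eAe`, so `t * s = s * t = e`), and
`a, b ∈ e + eJe`. -/
def SameOrbitJe {F A : Type*} [Field F] [Ring A] [Algebra F A]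
    (J : Ideal A) (S : Subalgebra F A) (e x y : A) : Prop :=
  ∃ t s : A, t ∈ S ∧ s ∈ S ∧ e * t = t ∧ t * e = t ∧ e * s = s ∧ s * e = s ∧
    t * s = e ∧ s * t = e ∧
    ∃ a b : A, a - e ∈ J ∧ e * a = a ∧ a * e = a ∧ b - e ∈ J ∧ e * b = b ∧ b * e = b ∧
      y = t * a * x * b * s

/-- Lemma 2.5 (2): two elements `x, y ∈ eJe` lie in the same `G̃`-orbit iff they lie in
the same `G̃_e`-orbit. -/
theorem sameOrbitJ_iff_sameOrbitJe
    {F A : Type*} [Field F] [Fintype F] [Ring A] [Algebra F A] [FiniteDimensional F A]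
    (J : Ideal A) (hJ : J = (⊥ : Ideal A).jacobson)
    (hJr : ∀ x ∈ J, ∀ a : A, x * a ∈ J)
    (hred : ∀ a b : A, a * b - b * a ∈ J)
    (S : Subalgebra F A)
    (hS : IsCompl (Subalgebra.toSubmodule S) (Submodule.restrictScalars F J))
    (e : A) (he : IsIdempotentElem e) (heS : e ∈ S)
    (x y : A) (hx : x ∈ J) (hex : e * x = x) (hxe : x * e = x)
    (hy : y ∈ J) (hey : e * y = y) (hye : y * e = y) :
    SameOrbitJ J S x y ↔ SameOrbitJe J S e x y := by
  -- S is commutative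
  have hcomm : ∀ u ∈ S, ∀ v ∈ S, u * v = v * u := by
    intro u hu v hv
    have h1 : u * v - v * u ∈ S :=
      sub_mem (mul_mem hu hv) (mul_mem hv hu)
    have h2 : u * v - v * u ∈ Submodule.restrictScalars F J := hred u v
    have h0 := Submodule.disjoint_def.mp hS.disjoint _ h1 h2
    exact sub_eq_zero.mp h0
  have push : ∀ {p q r : A}, p * q = r → ∀ z : A, p * (q * z) = r * z := by
    intro p q r h z; rw [← mul_assoc, h]
  constructor
  · rintro ⟨t, htS, htiS, a, b, haJ, hbJ, heq⟩
    have het : e * (t : A) = (t : A) * e := hcomm e heS t htS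
    have heti : e * ((t⁻¹ : Aˣ) : A) = ((t⁻¹ : Aˣ) : A) * e := hcomm e heS _ htiS
    have c1 : ∀ z : A, e * ((t : A) * z) = (t : A) * (e * z) := by
      intro z; rw [← mul_assoc, het, mul_assoc]
    have c2 : ∀ z : A, e * (((t⁻¹ : Aˣ) : A) * z) = ((t⁻¹ : Aˣ) : A) * (e * z) := by
      intro z; rw [← mul_assoc, heti, mul_assoc]
    refine ⟨(t : A) * e, ((t⁻¹ : Aˣ) : A) * e, mul_mem htS heS, mul_mem htiS heS,
      ?_, ?_, ?_, ?_, ?_, ?_, e * a * e, e * b * e, ?_, ?_, ?_, ?_, ?_, ?_, ?_⟩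
    · rw [← mul_assoc, het, mul_assoc, he.eq]
    · rw [mul_assoc, he.eq]
    · rw [← mul_assoc, heti, mul_assoc, he.eq]
    · rw [mul_assoc, he.eq]
    · -- (t*e) * (t⁻¹*e) = e
      rw [mul_assoc, ← mul_assoc e, heti, mul_assoc, he.eq, ← mul_assoc,
        Units.mul_inv, one_mul]
    · rw [mul_assoc, ← mul_assoc e, het, mul_assoc, he.eq, ← mul_assoc,
        Units.inv_mul, one_mul]
    · have : e * a * e - e = e * (a - 1) * e := by
        rw [mul_sub, mul_one, sub_mul, he.eq]
      rw [this]
      exact hJr _ (J.mul_mem_left e haJ) e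
    · rw [← mul_assoc, ← mul_assoc, he.eq]
    · rw [mul_assoc, he.eq]
    · have : e * b * e - e = e * (b - 1) * e := by
        rw [mul_sub, mul_one, sub_mul, he.eq]
      rw [this]
      exact hJr _ (J.mul_mem_left e hbJ) e
    · rw [← mul_assoc, ← mul_assoc, he.eq]
    · rw [mul_assoc, he.eq]
    · rw [show y = e * (y * e) from by rw [hye, hey], heq]
      simp only [mul_assoc, push he.eq, push hex, push hxe, c1, c2, he.eq, hex, hxe,
        het, heti]
  · rintro ⟨t, s, htS, hsS, het, hte, hes, hse, hts, hst, a, b, haJ, hea, hae,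
      hbJ, heb, hbe, heq⟩
    refine ⟨⟨t + (1 - e), s + (1 - e), ?_, ?_⟩, ?_, ?_, a + (1 - e), b + (1 - e),
      ?_, ?_, ?_⟩
    · simp only [mul_add, add_mul, mul_sub, sub_mul, mul_one, one_mul, hts, hte,
        hes, he.eq]
      abel
    · simp only [mul_add, add_mul, mul_sub, sub_mul, mul_one, one_mul, hst, hse,
        het, he.eq]
      abel
    · exact add_mem htS (sub_mem (one_mem S) heS)
    · exact add_mem hsS (sub_mem (one_mem S) heS)
    · rw [show a + (1 - e) - 1 = a - e from by abel]; exact haJ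
    · rw [show b + (1 - e) - 1 = b - e from by abel]; exact hbJ
    · show y = _
      rw [heq]
      simp only [Units.inv_mk]
      simp only [mul_add, add_mul, mul_sub, sub_mul, mul_one, one_mul, mul_assoc,
        push het, push hte, push hea, push hae, push hex, push hxe, push heb,
        push hbe, push hes, push hse, push he.eq, push hts, push hst,
        het, hte, hea, hae, hex, hxe, heb, hbe, hes, hse, he.eq, hts, hst]
      abel
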